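/- The cyclic action formula (01)*(t_{ij}) given by (01)*(t_{ij}) = t_{ij} if i,j ≠ 1, (01)*(t_{1j}) = −Σ_{k=1}^n t_{kj} for j ≠ 1, and (01)*(t_{11}) = Σ_{k,l=1}^n t_{kl}, defines an involutive Lie algebra automorphism of the framed Drinfeld–Kohno Lie algebra 𝔣𝔱ₙ, i.e., it respects the defining relations and squares to the identity. -/

import Mathlib

open FreeLieAlgebra

/-- Defining relations of the framed Drinfeld–Kohno Lie algebra 𝔣𝔱ₙ (generators out of
the range `1 ≤ i, j ≤ n` are set to zero). -/
def ftRels (k : Type) [Field k] (n : ℕ) : Set (FreeLieAlgebra k (ℕ × ℕ)) :=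
  { x | (∃ i j : ℕ, x = of k (i, j) - of k (j, i)) ∨
        (∃ i j : ℕ, ¬(1 ≤ i ∧ i ≤ n ∧ 1 ≤ j ∧ j ≤ n) ∧ x = of k (i, j)) ∨
        (∃ i j l m : ℕ, i ≠ l ∧ i ≠ m ∧ j ≠ l ∧ j ≠ m ∧ x = ⁅of k (i, j), of k (l, m)⁆) ∨
        (∃ i j l : ℕ, i ≠ j ∧ j ≠ l ∧ i ≠ l ∧ x = ⁅of k (i, j), of k (l, i) + of k (l, j)⁆) ∨
        (∃ i j l : ℕ, x = ⁅of k (i, i), of k (j, l)⁆) }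

noncomputable def ftIdeal (k : Type) [Field k] (n : ℕ) : LieIdeal k (FreeLieAlgebra k (ℕ × ℕ)) :=
  LieSubmodule.lieSpan k _ (ftRels k n)

/-- The framed Drinfeld–Kohno Lie algebra 𝔣𝔱ₙ. -/
abbrev ft (k : Type) [Field k] (n : ℕ) := FreeLieAlgebra k (ℕ × ℕ) ⧸ ftIdeal k n

noncomputable def ftGen (k : Type) [Field k] (n : ℕ) (i j : ℕ) : ft k n :=
  LieSubmodule.Quotient.mk' (ftIdeal k n) (of k (i, j))

section Aux

variable (k : Type) [Field k] (n : ℕ)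

/-- first-index sum of generators -/
noncomputable def Sg (j : ℕ) : ft k n := ∑ a ∈ Finset.Icc 1 n, ftGen k n a j

/-- total sum of generators -/
noncomputable def St : ft k n := ∑ a ∈ Finset.Icc 1 n, ∑ b ∈ Finset.Icc 1 n, ftGen k n a b

/-- the candidate images of generators -/
noncomputable def ff (p : ℕ × ℕ) : ft k n :=
  if ¬(1 ≤ p.1 ∧ p.1 ≤ n ∧ 1 ≤ p.2 ∧ p.2 ≤ n) then 0
  else if p.1 = 1 then (if p.2 = 1 then St k n else -Sg k n p.2)
  else if p.2 = 1 then -Sg k n p.1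
  else ftGen k n p.1 p.2

variable {k n}

lemma rel_zero {x : FreeLieAlgebra k (ℕ × ℕ)} (hx : x ∈ ftRels k n) :
    LieSubmodule.Quotient.mk' (ftIdeal k n) x = 0 :=
  (LieSubmodule.Quotient.mk_eq_zero _).2 (LieSubmodule.subset_lieSpan hx)

lemma Tsymm (i j : ℕ) : ftGen k n i j = ftGen k n j i := by
  have h := rel_zero (k := k) (n := n) (Or.inl ⟨i, j, rfl⟩)
  rw [map_sub, sub_eq_zero] at h
  exact h

lemma Tzero {i j : ℕ} (h : ¬(1 ≤ i ∧ i ≤ n ∧ 1 ≤ j ∧ j ≤ n)) : ftGen k n i j = 0 :=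
  rel_zero (Or.inr (Or.inl ⟨i, j, h, rfl⟩))

lemma A3 {i j l m : ℕ} (h1 : i ≠ l) (h2 : i ≠ m) (h3 : j ≠ l) (h4 : j ≠ m) :
    ⁅ftGen k n i j, ftGen k n l m⁆ = 0 := by
  have h := rel_zero (k := k) (n := n)
    (Or.inr (Or.inr (Or.inl ⟨i, j, l, m, h1, h2, h3, h4, rfl⟩)))
  exact h

lemma A4 {i j l : ℕ} (h1 : i ≠ j) (h2 : j ≠ l) (h3 : i ≠ l) :
    ⁅ftGen k n i j, ftGen k n l i + ftGen k n l j⁆ = 0 := by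
  have h := rel_zero (k := k) (n := n)
    (Or.inr (Or.inr (Or.inr (Or.inl ⟨i, j, l, h1, h2, h3, rfl⟩))))
  have h' : ftGen k n l i + ftGen k n l j
      = LieSubmodule.Quotient.mk' (ftIdeal k n) (of k (l, i) + of k (l, j)) :=
    (map_add _ _ _).symm
  rw [h']
  exact h

lemma A5 (i j l : ℕ) : ⁅ftGen k n i i, ftGen k n j l⁆ = 0 :=
  rel_zero (Or.inr (Or.inr (Or.inr (Or.inr ⟨i, j, l, rfl⟩))))

lemma A5' (i j l : ℕ) : ⁅ftGen k n j l, ftGen k n i i⁆ = 0 := by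
  rw [← lie_skew, A5, neg_zero]

end Aux

section Aux2

variable {k : Type} [Field k] {n : ℕ}

lemma sum_lie' {α : Type} (s : Finset α) (g : α → ft k n) (x : ft k n) :
    ⁅∑ a ∈ s, g a, x⁆ = ∑ a ∈ s, ⁅g a, x⁆ := by
  classical
  induction s using Finset.induction with
  | empty => simp
  | insert _ _ h ih => rw [Finset.sum_insert h, Finset.sum_insert h, add_lie, ih]

lemma lie_sum' {α : Type} (s : Finset α) (g : α → ft k n) (x : ft k n) :
    ⁅x, ∑ a ∈ s, g a⁆ = ∑ a ∈ s, ⁅x, g a⁆ := by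
  classical
  induction s using Finset.induction with
  | empty => simp
  | insert _ _ h ih => rw [Finset.sum_insert h, Finset.sum_insert h, lie_add, ih]

lemma Sg_lie (j : ℕ) (x : ft k n) :
    ⁅Sg k n j, x⁆ = ∑ a ∈ Finset.Icc 1 n, ⁅ftGen k n a j, x⁆ := by
  rw [Sg, sum_lie']

lemma lie_Sg (j : ℕ) (x : ft k n) :
    ⁅x, Sg k n j⁆ = ∑ a ∈ Finset.Icc 1 n, ⁅x, ftGen k n a j⁆ := by
  rw [Sg, lie_sum']

lemma L3 (a : ℕ) {l m : ℕ} (hlm : l ≠ m) :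
    ⁅ftGen k n l m, ftGen k n a l + ftGen k n a m⁆ = 0 := by
  by_cases hal : a = l
  · subst hal
    rw [lie_add, A5', lie_self, add_zero]
  · by_cases ham : a = m
    · subst ham
      rw [Tsymm a l, lie_add, lie_self, A5', add_zero]
    · exact A4 hlm (fun h => ham h.symm) (fun h => hal h.symm)

lemma L2 {j l m : ℕ} (h1 : j ≠ l) (h2 : j ≠ m) :
    ⁅Sg k n j, ftGen k n l m⁆ = 0 := by
  rw [Sg_lie]
  by_cases hlm : l = m
  · subst hlm
    exact Finset.sum_eq_zero fun a _ => A5' l a j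
  · by_cases hr : l ∈ Finset.Icc 1 n ∧ m ∈ Finset.Icc 1 n
    · have hsub : ({l, m} : Finset ℕ) ⊆ Finset.Icc 1 n := by
        intro x hx
        rcases Finset.mem_insert.1 hx with h | h
        · exact h ▸ hr.1
        · exact (Finset.mem_singleton.1 h) ▸ hr.2
      rw [← Finset.sum_subset hsub (fun x _ hx => by
        have hxl : x ≠ l := fun h => hx (by simp [h])
        have hxm : x ≠ m := fun h => hx (by simp [h])
        exact A3 hxl hxm h1 h2)]
      rw [Finset.sum_pair hlm]
      have h4 := A4 (k := k) (n := n) hlm (fun h => h2 h.symm) (fun h => h1 h.symm)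
      rw [lie_add] at h4
      rw [Tsymm l j, Tsymm m j, show ⁅ftGen k n j l, ftGen k n l m⁆
          = -⁅ftGen k n l m, ftGen k n j l⁆ from (lie_skew _ _).symm,
        show ⁅ftGen k n j m, ftGen k n l m⁆
          = -⁅ftGen k n l m, ftGen k n j m⁆ from (lie_skew _ _).symm,
        ← neg_add, h4, neg_zero]
    · have : ftGen k n l m = 0 := by
        apply Tzero
        simp only [Finset.mem_Icc] at hr
        tauto
      rw [this]
      exact Finset.sum_eq_zero fun a _ => lie_zero _

lemma E1 {j l : ℕ} (h : j ≠ l) (hj : j ∈ Finset.Icc 1 n) :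
    ⁅Sg k n j, Sg k n l⁆ = ⁅Sg k n j, ftGen k n j l⁆ := by
  rw [lie_Sg]
  exact Finset.sum_eq_single_of_mem j hj fun m _ hm => L2 (fun h' => hm h'.symm) h

lemma StSg : St k n = ∑ b ∈ Finset.Icc 1 n, Sg k n b := by
  rw [St, Finset.sum_comm]
  rfl

lemma L1 (l m : ℕ) : ⁅St k n, ftGen k n l m⁆ = 0 := by
  rw [StSg, sum_lie']
  by_cases hlm : l = m
  · subst hlm
    exact Finset.sum_eq_zero fun b _ => by
      rw [Sg_lie]
      exact Finset.sum_eq_zero fun a _ => A5' l a b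
  · by_cases hr : l ∈ Finset.Icc 1 n ∧ m ∈ Finset.Icc 1 n
    · have hsub : ({l, m} : Finset ℕ) ⊆ Finset.Icc 1 n := by
        intro x hx
        rcases Finset.mem_insert.1 hx with h | h
        · exact h ▸ hr.1
        · exact (Finset.mem_singleton.1 h) ▸ hr.2
      rw [← Finset.sum_subset hsub (fun x _ hx => by
        have hxl : x ≠ l := fun h => hx (by simp [h])
        have hxm : x ≠ m := fun h => hx (by simp [h])
        exact L2 hxl hxm)]
      rw [Finset.sum_pair hlm, Sg_lie, Sg_lie, ← Finset.sum_add_distrib]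
      refine Finset.sum_eq_zero fun a _ => ?_
      rw [← add_lie, show ⁅ftGen k n a l + ftGen k n a m, ftGen k n l m⁆
        = -⁅ftGen k n l m, ftGen k n a l + ftGen k n a m⁆ from (lie_skew _ _).symm,
        L3 a hlm, neg_zero]
    · have : ftGen k n l m = 0 := by
        apply Tzero
        simp only [Finset.mem_Icc] at hr
        tauto
      rw [this]
      exact Finset.sum_eq_zero fun a _ => lie_zero _

lemma ffzero {i j : ℕ} (h : ¬(1 ≤ i ∧ i ≤ n ∧ 1 ≤ j ∧ j ≤ n)) : ff k n (i, j) = 0 := by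
  rw [ff]
  simp [h]

lemma ff_cases (p : ℕ × ℕ) : ff k n p = 0 ∨ ff k n p = St k n ∨
    (∃ j, ff k n p = -Sg k n j) ∨ (∃ i j, ff k n p = ftGen k n i j) := by
  rw [ff]
  split_ifs
  · exact Or.inr (Or.inl rfl)
  · exact Or.inr (Or.inr (Or.inl ⟨_, rfl⟩))
  · exact Or.inr (Or.inr (Or.inl ⟨_, rfl⟩))
  · exact Or.inr (Or.inr (Or.inr ⟨_, _, rfl⟩))
  · exact Or.inl rfl

lemma lie_St_gen (x : ft k n) (h : ∀ a b, ⁅x, ftGen k n a b⁆ = 0) : ∀ p, ⁅x, ff k n p⁆ = 0 := by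
  intro p
  have hSg : ∀ j, ⁅x, Sg k n j⁆ = 0 := fun j => by
    rw [lie_Sg]
    exact Finset.sum_eq_zero fun a _ => h a j
  have hSt : ⁅x, St k n⁆ = 0 := by
    rw [StSg, lie_sum']
    exact Finset.sum_eq_zero fun b _ => hSg b
  rcases ff_cases (k := k) (n := n) p with h0 | h0 | ⟨j, h0⟩ | ⟨i, j, h0⟩ <;> rw [h0]
  · exact lie_zero _
  · exact hSt
  · rw [lie_neg, hSg, neg_zero]
  · exact h i j

lemma Bf (p : ℕ × ℕ) : ⁅St k n, ff k n p⁆ = 0 :=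
  lie_St_gen _ (fun a b => L1 a b) p

lemma B4 (i : ℕ) (p : ℕ × ℕ) : ⁅ftGen k n i i, ff k n p⁆ = 0 :=
  lie_St_gen _ (fun a b => A5 i a b) p

lemma fsymm (i j : ℕ) : ff k n (i, j) = ff k n (j, i) := by
  rw [ff, ff]
  split_ifs <;> first | rfl | exact Tsymm _ _ | omega

end Aux2

section Aux3

variable {k : Type} [Field k] {n : ℕ}

lemma ff_T {i j : ℕ} (h : 1 ≤ i ∧ i ≤ n ∧ 1 ≤ j ∧ j ≤ n) (hi : i ≠ 1) (hj : j ≠ 1) :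
    ff k n (i, j) = ftGen k n i j := by
  rw [ff, if_neg (not_not_intro h), if_neg hi, if_neg hj]

lemma ff_1j {j : ℕ} (h : 1 ≤ j ∧ j ≤ n) (hj : j ≠ 1) (hn : 1 ≤ n) :
    ff k n (1, j) = -Sg k n j := by
  have hc : 1 ≤ (1:ℕ) ∧ 1 ≤ n ∧ 1 ≤ j ∧ j ≤ n := ⟨le_refl 1, hn, h.1, h.2⟩
  rw [ff, if_neg (not_not_intro hc), if_pos rfl, if_neg hj]

lemma ff_i1 {i : ℕ} (h : 1 ≤ i ∧ i ≤ n) (hi : i ≠ 1) (hn : 1 ≤ n) :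
    ff k n (i, 1) = -Sg k n i := by
  have hc : 1 ≤ i ∧ i ≤ n ∧ 1 ≤ (1:ℕ) ∧ 1 ≤ n := ⟨h.1, h.2, le_refl 1, hn⟩
  rw [ff, if_neg (not_not_intro hc), if_neg hi, if_pos rfl]

lemma ff_11 (hn : 1 ≤ n) : ff k n (1, 1) = St k n := by
  have hc : 1 ≤ (1:ℕ) ∧ 1 ≤ n ∧ 1 ≤ (1:ℕ) ∧ 1 ≤ n := ⟨le_refl 1, hn, le_refl 1, hn⟩
  rw [ff, if_neg (not_not_intro hc), if_pos rfl, if_pos rfl]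

variable (hn : 1 ≤ n)
include hn

lemma Cside {i j l m : ℕ} (hl1 : l ≠ 1) (hm1 : m ≠ 1)
    (h1 : i ≠ l) (h2 : i ≠ m) (h3 : j ≠ l) (h4 : j ≠ m) :
    ⁅ff k n (i, j), ff k n (l, m)⁆ = 0 := by
  by_cases hlm : 1 ≤ l ∧ l ≤ n ∧ 1 ≤ m ∧ m ≤ n
  · rw [ff_T hlm hl1 hm1]
    by_cases hij : 1 ≤ i ∧ i ≤ n ∧ 1 ≤ j ∧ j ≤ n
    · by_cases hi : i = 1
      · subst hi
        by_cases hj : j = 1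
        · subst hj
          rw [ff_11 hn]
          exact L1 l m
        · rw [ff_1j ⟨hij.2.2.1, hij.2.2.2⟩ hj hn, neg_lie, L2 h3 h4, neg_zero]
      · by_cases hj : j = 1
        · subst hj
          rw [ff_i1 ⟨hij.1, hij.2.1⟩ hi hn, neg_lie, L2 h1 h2, neg_zero]
        · rw [ff_T hij hi hj]
          exact A3 h1 h2 h3 h4
    · rw [ffzero hij, zero_lie]
  · rw [ffzero hlm, lie_zero]

lemma Fmain {i j l m : ℕ} (h1 : i ≠ l) (h2 : i ≠ m) (h3 : j ≠ l) (h4 : j ≠ m) :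
    ⁅ff k n (i, j), ff k n (l, m)⁆ = 0 := by
  by_cases h : l = 1 ∨ m = 1
  · have hi1 : i ≠ 1 := by rcases h with h | h <;> [exact h ▸ h1; exact h ▸ h2]
    have hj1 : j ≠ 1 := by rcases h with h | h <;> [exact h ▸ h3; exact h ▸ h4]
    rw [show ⁅ff k n (i, j), ff k n (l, m)⁆ = -⁅ff k n (l, m), ff k n (i, j)⁆ from
      (lie_skew _ _).symm,
      Cside hn hi1 hj1 (fun h' => h1 h'.symm) (fun h' => h3 h'.symm)
        (fun h' => h2 h'.symm) (fun h' => h4 h'.symm), neg_zero]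
  · push_neg at h
    exact Cside hn h.1 h.2 h1 h2 h3 h4

lemma F4 {i j l : ℕ} (hij : i ≠ j) (hjl : j ≠ l) (hil : i ≠ l) :
    ⁅ff k n (i, j), ff k n (l, i) + ff k n (l, j)⁆ = 0 := by
  by_cases hi : 1 ≤ i ∧ i ≤ n
  · by_cases hj : 1 ≤ j ∧ j ≤ n
    · by_cases hl : 1 ≤ l ∧ l ≤ n
      · -- all in range
        by_cases hl1 : l = 1
        · subst hl1
          have hi1 : i ≠ 1 := hil
          have hj1 : j ≠ 1 := hjl
          rw [ff_T ⟨hi.1, hi.2, hj.1, hj.2⟩ hi1 hj1, ff_1j hi hi1 hn, ff_1j hj hj1 hn,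
            ← neg_add, lie_neg, Sg, Sg, ← Finset.sum_add_distrib, lie_sum',
            Finset.sum_eq_zero fun a _ => L3 a hij, neg_zero]
        · by_cases hi1 : i = 1
          · subst hi1
            have hj1 : j ≠ 1 := fun h => hij h.symm
            rw [ff_1j hj hj1 hn, ff_i1 hl hl1 hn, ff_T ⟨hl.1, hl.2, hj.1, hj.2⟩ hl1 hj1,
              neg_lie, lie_add, lie_neg,
              E1 hjl ((Finset.mem_Icc).2 hj), Tsymm j l, neg_add_cancel, neg_zero]
          · by_cases hj1 : j = 1
            · subst hj1
              rw [ff_i1 hi hi1 hn, ff_T ⟨hl.1, hl.2, hi.1, hi.2⟩ hl1 hi1, ff_i1 hl hl1 hn,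
                neg_lie, lie_add, lie_neg,
                E1 (fun h => hil h) ((Finset.mem_Icc).2 hi), Tsymm i l, add_neg_cancel,
                neg_zero]
            · rw [ff_T ⟨hi.1, hi.2, hj.1, hj.2⟩ hi1 hj1, ff_T ⟨hl.1, hl.2, hi.1, hi.2⟩ hl1 hi1,
                ff_T ⟨hl.1, hl.2, hj.1, hj.2⟩ hl1 hj1]
              exact A4 hij hjl hil
      · have z1 : ff k n (l, i) = 0 := ffzero (by tauto)
        have z2 : ff k n (l, j) = 0 := ffzero (by tauto)
        rw [z1, z2, add_zero, lie_zero]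
    · rw [ffzero (i := i) (j := j) (by tauto), zero_lie]
  · rw [ffzero (i := i) (j := j) (by tauto), zero_lie]

lemma F5 (i j l : ℕ) : ⁅ff k n (i, i), ff k n (j, l)⁆ = 0 := by
  by_cases hi : 1 ≤ i ∧ i ≤ n
  · by_cases hi1 : i = 1
    · subst hi1
      rw [ff_11 hn]
      exact Bf _
    · rw [ff_T ⟨hi.1, hi.2, hi.1, hi.2⟩ hi1 hi1]
      exact B4 _ _
  · rw [ffzero (by tauto), zero_lie]

end Aux3

section Main

variable (k : Type) [Field k] (n : ℕ)

noncomputable def Phi : FreeLieAlgebra k (ℕ × ℕ) →ₗ⁅k⁆ ft k n :=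
  FreeLieAlgebra.lift k (ff k n)

variable {k n}

lemma Phi_of (p : ℕ × ℕ) : Phi k n (of k p) = ff k n p :=
  FreeLieAlgebra.lift_of_apply _ _

lemma Phi_rels (hn : 1 ≤ n) : ∀ x ∈ ftRels k n, Phi k n x = 0 := by
  intro x hx
  rcases hx with ⟨i, j, rfl⟩ | ⟨i, j, h, rfl⟩ | ⟨i, j, l, m, h1, h2, h3, h4, rfl⟩ |
    ⟨i, j, l, h1, h2, h3, rfl⟩ | ⟨i, j, l, rfl⟩
  · rw [map_sub, Phi_of, Phi_of, fsymm, sub_self]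
  · rw [Phi_of, ffzero h]
  · rw [LieHom.map_lie, Phi_of, Phi_of]
    exact Fmain hn h1 h2 h3 h4
  · rw [LieHom.map_lie, map_add, Phi_of, Phi_of, Phi_of]
    exact F4 hn h1 h2 h3
  · rw [LieHom.map_lie, Phi_of, Phi_of]
    exact F5 hn i j l

lemma Phi_ideal (hn : 1 ≤ n) {x : FreeLieAlgebra k (ℕ × ℕ)} (hx : x ∈ ftIdeal k n) :
    Phi k n x = 0 := by
  have : ftIdeal k n ≤ (Phi k n).ker :=
    LieSubmodule.lieSpan_le.2 fun y hy => LieHom.mem_ker.2 (Phi_rels hn y hy)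
  exact LieHom.mem_ker.1 (this hx)

noncomputable def ebarLin (hn : 1 ≤ n) : ft k n →ₗ[k] ft k n :=
  Submodule.liftQ (ftIdeal k n).toSubmodule
    ((Phi k n) : FreeLieAlgebra k (ℕ × ℕ) →ₗ[k] ft k n)
    (fun x hx => LinearMap.mem_ker.2 (Phi_ideal hn hx))

lemma ebarLin_mk (hn : 1 ≤ n) (x : FreeLieAlgebra k (ℕ × ℕ)) :
    ebarLin (k := k) (n := n) hn (LieSubmodule.Quotient.mk' (ftIdeal k n) x) = Phi k n x :=
  rfl

noncomputable def ebar (hn : 1 ≤ n) : ft k n →ₗ⁅k⁆ ft k n :=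
  { ebarLin (k := k) (n := n) hn with
    map_lie' := by
      intro x y
      obtain ⟨a, rfl⟩ := LieSubmodule.Quotient.surjective_mk' (ftIdeal k n) x
      obtain ⟨b, rfl⟩ := LieSubmodule.Quotient.surjective_mk' (ftIdeal k n) y
      show ebarLin hn ⁅LieSubmodule.Quotient.mk' (ftIdeal k n) a,
          LieSubmodule.Quotient.mk' (ftIdeal k n) b⁆
        = ⁅ebarLin hn (LieSubmodule.Quotient.mk' (ftIdeal k n) a),
           ebarLin hn (LieSubmodule.Quotient.mk' (ftIdeal k n) b)⁆
      rw [show (⁅LieSubmodule.Quotient.mk' (ftIdeal k n) a,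
          LieSubmodule.Quotient.mk' (ftIdeal k n) b⁆ : ft k n)
        = LieSubmodule.Quotient.mk' (ftIdeal k n) ⁅a, b⁆ from rfl]
      rw [ebarLin_mk, ebarLin_mk, ebarLin_mk]
      exact LieHom.map_lie _ _ _ }

lemma ebar_apply (hn : 1 ≤ n) (x : ft k n) :
    ebar (k := k) (n := n) hn x = ebarLin (k := k) (n := n) hn x := rfl

lemma ebar_T (hn : 1 ≤ n) (i j : ℕ) :
    ebar (k := k) (n := n) hn (ftGen k n i j) = ff k n (i, j) := by
  rw [ebar_apply, ftGen, ebarLin_mk, Phi_of]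

lemma sum_ff_col (hn : 1 ≤ n) {j : ℕ} (hj : 1 ≤ j ∧ j ≤ n) (hj1 : j ≠ 1) :
    ∑ a ∈ Finset.Icc 1 n, ff k n (a, j) = -ftGen k n 1 j := by
  have h1 : (1 : ℕ) ∈ Finset.Icc 1 n := Finset.mem_Icc.2 ⟨le_rfl, hn⟩
  rw [← Finset.add_sum_erase _ _ h1, ff_1j hj hj1 hn,
    Finset.sum_congr rfl (fun a ha => ff_T
      ⟨(Finset.mem_Icc.1 (Finset.mem_of_mem_erase ha)).1,
       (Finset.mem_Icc.1 (Finset.mem_of_mem_erase ha)).2, hj.1, hj.2⟩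
      (Finset.ne_of_mem_erase ha) hj1)]
  have h2 : ftGen k n 1 j + ∑ a ∈ (Finset.Icc 1 n).erase 1, ftGen k n a j = Sg k n j := by
    rw [Sg]
    exact Finset.add_sum_erase (Finset.Icc 1 n) (fun a => ftGen k n a j) h1
  have h3 : ∑ a ∈ (Finset.Icc 1 n).erase 1, ftGen k n a j = Sg k n j - ftGen k n 1 j := by
    rw [← h2]; abel
  rw [h3]
  abel

lemma sum_ff_row (hn : 1 ≤ n) {a : ℕ} (ha : 1 ≤ a ∧ a ≤ n) (ha1 : a ≠ 1) :
    ∑ b ∈ Finset.Icc 1 n, ff k n (a, b) = -ftGen k n a 1 := by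
  have h : ∀ b, ff k n (a, b) = ff k n (b, a) := fun b => fsymm a b
  calc ∑ b ∈ Finset.Icc 1 n, ff k n (a, b)
      = ∑ b ∈ Finset.Icc 1 n, ff k n (b, a) := Finset.sum_congr rfl fun b _ => h b
    _ = -ftGen k n 1 a := sum_ff_col hn ha ha1
    _ = -ftGen k n a 1 := by rw [Tsymm 1 a]

lemma sum_ff_all (hn : 1 ≤ n) :
    ∑ a ∈ Finset.Icc 1 n, ∑ b ∈ Finset.Icc 1 n, ff k n (a, b) = ftGen k n 1 1 := by
  have h1 : (1 : ℕ) ∈ Finset.Icc 1 n := Finset.mem_Icc.2 ⟨le_rfl, hn⟩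
  have hA : ∑ b ∈ Finset.Icc 1 n, ff k n (1, b)
      = St k n - ∑ b ∈ (Finset.Icc 1 n).erase 1, Sg k n b := by
    rw [← Finset.add_sum_erase _ _ h1, ff_11 hn,
      Finset.sum_congr rfl (fun b hb => ff_1j
        ⟨(Finset.mem_Icc.1 (Finset.mem_of_mem_erase hb)).1,
         (Finset.mem_Icc.1 (Finset.mem_of_mem_erase hb)).2⟩
        (Finset.ne_of_mem_erase hb) hn),
      Finset.sum_neg_distrib]
    abel
  have hB : ∑ a ∈ (Finset.Icc 1 n).erase 1, ∑ b ∈ Finset.Icc 1 n, ff k n (a, b)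
      = -(Sg k n 1 - ftGen k n 1 1) := by
    rw [Finset.sum_congr rfl (fun a ha => sum_ff_row hn
      ⟨(Finset.mem_Icc.1 (Finset.mem_of_mem_erase ha)).1,
       (Finset.mem_Icc.1 (Finset.mem_of_mem_erase ha)).2⟩
      (Finset.ne_of_mem_erase ha)), Finset.sum_neg_distrib]
    have h2 : ftGen k n 1 1 + ∑ a ∈ (Finset.Icc 1 n).erase 1, ftGen k n a 1 = Sg k n 1 := by
      rw [Sg]
      exact Finset.add_sum_erase (Finset.Icc 1 n) (fun a => ftGen k n a 1) h1
    have h3 : ∑ a ∈ (Finset.Icc 1 n).erase 1, ftGen k n a 1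
        = Sg k n 1 - ftGen k n 1 1 := by rw [← h2]; abel
    rw [h3]
  have hC : St k n = Sg k n 1 + ∑ b ∈ (Finset.Icc 1 n).erase 1, Sg k n b := by
    rw [StSg]
    exact (Finset.add_sum_erase (Finset.Icc 1 n) (fun b => Sg k n b) h1).symm
  rw [← Finset.add_sum_erase _ _ h1, hA, hB, hC]
  abel

lemma ebar_Sg (hn : 1 ≤ n) {j : ℕ} (hj : 1 ≤ j ∧ j ≤ n) (hj1 : j ≠ 1) :
    ebar (k := k) (n := n) hn (Sg k n j) = -ftGen k n 1 j := by
  rw [ebar_apply, Sg,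
    map_sum (ebarLin (k := k) (n := n) hn) (fun a => ftGen k n a j) (Finset.Icc 1 n),
    Finset.sum_congr rfl (fun a _ => (ebar_apply hn (ftGen k n a j)) ▸ ebar_T hn a j)]
  exact sum_ff_col hn hj hj1

lemma ebar_St (hn : 1 ≤ n) :
    ebar (k := k) (n := n) hn (St k n) = ftGen k n 1 1 := by
  rw [ebar_apply, St,
    map_sum (ebarLin (k := k) (n := n) hn)
      (fun a => ∑ b ∈ Finset.Icc 1 n, ftGen k n a b) (Finset.Icc 1 n),
    Finset.sum_congr rfl (fun a _ =>
      map_sum (ebarLin (k := k) (n := n) hn) (fun b => ftGen k n a b) (Finset.Icc 1 n)),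
    Finset.sum_congr rfl (fun a _ => Finset.sum_congr rfl
      (fun b _ => (ebar_apply hn (ftGen k n a b)) ▸ ebar_T hn a b))]
  exact sum_ff_all hn

lemma invol_gen (hn : 1 ≤ n) (i j : ℕ) :
    ebar (k := k) (n := n) hn (ff k n (i, j)) = ftGen k n i j := by
  by_cases hij : 1 ≤ i ∧ i ≤ n ∧ 1 ≤ j ∧ j ≤ n
  · by_cases hi : i = 1
    · subst hi
      by_cases hj : j = 1
      · subst hj
        rw [ff_11 hn]
        exact ebar_St hn
      · rw [ff_1j ⟨hij.2.2.1, hij.2.2.2⟩ hj hn, map_neg,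
          ebar_Sg hn ⟨hij.2.2.1, hij.2.2.2⟩ hj, neg_neg]
    · by_cases hj : j = 1
      · subst hj
        rw [ff_i1 ⟨hij.1, hij.2.1⟩ hi hn, map_neg,
          ebar_Sg hn ⟨hij.1, hij.2.1⟩ hi, neg_neg, Tsymm 1 i]
      · rw [ff_T hij hi hj, ebar_T, ff_T hij hi hj]
  · rw [ffzero hij, map_zero, Tzero hij]

noncomputable def mkL : FreeLieAlgebra k (ℕ × ℕ) →ₗ⁅k⁆ ft k n :=
  { (ftIdeal k n).toSubmodule.mkQ with
    map_lie' := fun {_ _} => rfl }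

lemma mkL_of (p : ℕ × ℕ) : mkL (k := k) (n := n) (of k p) = ftGen k n p.1 p.2 := rfl

lemma invol (hn : 1 ≤ n) : ∀ x : ft k n, ebar hn (ebar hn x) = x := by
  have key : ((ebar hn).comp ((ebar hn).comp (mkL (k := k) (n := n)))) = mkL := by
    apply FreeLieAlgebra.hom_ext
    intro p
    show ebar hn (ebar hn (mkL (of k p))) = mkL (of k p)
    rw [mkL_of, ebar_T, invol_gen hn]
  intro x
  obtain ⟨a, rfl⟩ := LieSubmodule.Quotient.surjective_mk' (ftIdeal k n) x
  have h := DFunLike.congr_fun key a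
  exact h

end Main

/-- The cyclic-action formula `(01)*` — fixing `t_{ij}` for `i, j ≠ 1`, sending
`t_{1j} ↦ −Σ_{k=1}^n t_{kj}` for `j ≠ 1` and `t_{11} ↦ Σ_{k,l=1}^n t_{kl}` — defines an
involutive Lie algebra automorphism of the framed Drinfeld–Kohno Lie algebra 𝔣𝔱ₙ: it
respects the defining relations and squares to the identity. -/
theorem cyclic_transposition_automorphism
    (k : Type) [Field k] [CharZero k] (n : ℕ) (hn : 1 ≤ n) :
    ∃ e : ft k n ≃ₗ⁅k⁆ ft k n,
      (∀ i j : ℕ, 1 ≤ i → i ≤ n → 1 ≤ j → j ≤ n → i ≠ 1 → j ≠ 1 →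
        e (ftGen k n i j) = ftGen k n i j) ∧
      (∀ j : ℕ, 1 ≤ j → j ≤ n → j ≠ 1 →
        e (ftGen k n 1 j) = -∑ l ∈ Finset.Icc 1 n, ftGen k n l j) ∧
      (e (ftGen k n 1 1) = ∑ l ∈ Finset.Icc 1 n, ∑ p ∈ Finset.Icc 1 n, ftGen k n l p) ∧
      (∀ x : ft k n, e (e x) = x) := by
  refine ⟨{ ebar (k := k) (n := n) hn with
            invFun := ebar (k := k) (n := n) hn
            left_inv := invol hn
            right_inv := invol hn }, ?_, ?_, ?_, ?_⟩
  · intro i j hi1 hi2 hj1 hj2 hi hj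
    show ebar (k := k) (n := n) hn (ftGen k n i j) = ftGen k n i j
    rw [ebar_T, ff_T ⟨hi1, hi2, hj1, hj2⟩ hi hj]
  · intro j hj1 hj2 hj
    show ebar (k := k) (n := n) hn (ftGen k n 1 j) = -∑ l ∈ Finset.Icc 1 n, ftGen k n l j
    rw [ebar_T, ff_1j ⟨hj1, hj2⟩ hj hn, Sg]
  · show ebar (k := k) (n := n) hn (ftGen k n 1 1)
      = ∑ l ∈ Finset.Icc 1 n, ∑ p ∈ Finset.Icc 1 n, ftGen k n l p
    rw [ebar_T, ff_11 hn, St]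
  · intro x
    exact invol hn x
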